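/- Let P*_n(x,z) = Σ_{σ ∈ S_n} x^{jump(σ)} z^{lsuc(σ)} with P*_0 = 1, and P_n(x,z) = Σ_{σ ∈ S_n} x^{asc(σ)} z^{suc(σ)} with P_0 = 1. Then for every n ≥ 1, P_n(x,z) = P*_n(x, xz) + x(1-z)·P*_{n-1}(x, xz) as an identity of polynomials in ℤ[x,z]. -/

import Mathlib

/-!
Every ascent of `σ` (including the one at position `0`, where `σ(0) = 0`) is either a left
succession or a jump, so `asc = jump + lsuc` and `P*_n(x, xz) = Σ_σ x^asc z^lsuc`. Moreover
`lsuc` and `suc` differ only by the succession at position `1`, present exactly when `σ(1) = 1`.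
Hence `P_n - P*_n(x, xz) = (1 - z) Σ_{σ(1) = 1} x^asc z^suc`, and removing the fixed point `1`
maps these `σ` bijectively onto `S_{n-1}`, losing one ascent and turning `suc` into `lsuc`.
-/

open Finset

/-- The value `σ(i)` of a permutation of `{1,…,n}` at a one-based position `i`,
with the convention `σ(0) = 0` (and value `0` outside `[1,n]`). -/
def pv {n : ℕ} (σ : Equiv.Perm (Fin n)) (i : ℕ) : ℕ :=
  if h : 1 ≤ i ∧ i ≤ n then ((σ ⟨i - 1, by omega⟩ : Fin n) : ℕ) + 1 else 0

/-- Number of excedances: indices `i` with `σ(i) > i`. -/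
def exc {n : ℕ} (σ : Equiv.Perm (Fin n)) : ℕ :=
  ((Finset.Icc 1 n).filter (fun i => i < pv σ i)).card

/-- Number of fixed points: indices `i` with `σ(i) = i`. -/
def fixpt {n : ℕ} (σ : Equiv.Perm (Fin n)) : ℕ :=
  ((Finset.Icc 1 n).filter (fun i => pv σ i = i)).card

/-- Number of left successions: indices `1 ≤ i ≤ n` with `σ(i-1) + 1 = σ(i)`. -/
def lsuc {n : ℕ} (σ : Equiv.Perm (Fin n)) : ℕ :=
  ((Finset.Icc 1 n).filter (fun i => pv σ (i - 1) + 1 = pv σ i)).card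

/-- Number of jumps: indices `1 ≤ i ≤ n` with `σ(i) ≥ σ(i-1) + 2`. -/
def jump {n : ℕ} (σ : Equiv.Perm (Fin n)) : ℕ :=
  ((Finset.Icc 1 n).filter (fun i => pv σ (i - 1) + 2 ≤ pv σ i)).card

/-- Number of interior successions: indices `1 ≤ i ≤ n-1` with `σ(i) + 1 = σ(i+1)`. -/
def suc {n : ℕ} (σ : Equiv.Perm (Fin n)) : ℕ :=
  ((Finset.Icc 1 (n - 1)).filter (fun i => pv σ i + 1 = pv σ (i + 1))).card

/-- Number of ascents: indices `0 ≤ i ≤ n-1` with `σ(i) < σ(i+1)` (with `σ(0) = 0`). -/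
def asc {n : ℕ} (σ : Equiv.Perm (Fin n)) : ℕ :=
  ((Finset.range n).filter (fun i => pv σ i < pv σ (i + 1))).card

open MvPolynomial

/-- `P*_n(x,z) = Σ_{σ ∈ S_n} x^{jump σ} z^{lsuc σ}` with `x = X 0`, `z = X 1`. -/
noncomputable def Pstar (n : ℕ) : MvPolynomial (Fin 2) ℤ :=
  ∑ σ : Equiv.Perm (Fin n), X 0 ^ jump σ * X 1 ^ lsuc σ

/-- `P_n(x,z) = Σ_{σ ∈ S_n} x^{asc σ} z^{suc σ}`. -/
noncomputable def Ppoly (n : ℕ) : MvPolynomial (Fin 2) ℤ :=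
  ∑ σ : Equiv.Perm (Fin n), X 0 ^ asc σ * X 1 ^ suc σ

/-- The substitution `x ↦ x`, `z ↦ x z`. -/
noncomputable def subXZ : MvPolynomial (Fin 2) ℤ →ₐ[ℤ] MvPolynomial (Fin 2) ℤ :=
  MvPolynomial.aeval ![X 0, X 0 * X 1]

open Equiv

lemma card_filter_Icc_one (n : ℕ) (p : ℕ → Prop) [DecidablePred p] :
    #{i ∈ Icc 1 n | p i} = #{i ∈ range n | p (i + 1)} := by
  have h := map_add_right_Ico 0 n 1
  rw [zero_add] at h
  rw [← Ico_add_one_right_eq_Icc, range_eq_Ico, ← h, filter_map, card_map]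
  rfl

lemma card_filter_range_succ' (n : ℕ) (p : ℕ → Prop) [DecidablePred p] :
    #{i ∈ range (n + 1) | p i} = #{i ∈ range n | p (i + 1)} + if p 0 then 1 else 0 := by
  simp only [← Nat.count_eq_card_filter_range, Nat.count_succ']

section Statistics

variable {n : ℕ} (σ : Perm (Fin n))

lemma pv_zero : pv σ 0 = 0 := dif_neg (by omega)

lemma pv_succ {i : ℕ} (hi : i < n) : pv σ (i + 1) = σ ⟨i, hi⟩ + 1 :=
  dif_pos ⟨by omega, hi⟩

lemma jump_eq_card : jump σ = #{i ∈ range n | pv σ i + 2 ≤ pv σ (i + 1)} := by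
  rw [jump, card_filter_Icc_one]
  rfl

lemma lsuc_eq_card : lsuc σ = #{i ∈ range n | pv σ i + 1 = pv σ (i + 1)} := by
  rw [lsuc, card_filter_Icc_one]
  rfl

lemma suc_eq_card : suc σ = #{i ∈ range (n - 1) | pv σ (i + 1) + 1 = pv σ (i + 1 + 1)} := by
  rw [suc, card_filter_Icc_one]

lemma asc_eq_jump_add_lsuc : asc σ = jump σ + lsuc σ := by
  rw [asc, jump_eq_card, lsuc_eq_card, ← card_union_of_disjoint, ← filter_or]
  · exact congrArg card (filter_congr fun i _ => by omega)
  · exact disjoint_filter.2 fun i _ _ => by omega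

end Statistics

lemma lsuc_eq_suc_add {m : ℕ} (σ : Perm (Fin (m + 1))) :
    lsuc σ = suc σ + if σ 0 = 0 then 1 else 0 := by
  rw [lsuc_eq_card, card_filter_range_succ', suc_eq_card, Nat.add_sub_cancel, pv_zero,
    pv_succ σ m.succ_pos, zero_add]
  congr 1
  exact if_congr (by simp [Fin.ext_iff, eq_comm]) rfl rfl

section FixingZero

-- `decomposeFin.symm (0, τ)` fixes `0` and acts as `τ` shifted up by one.
variable {m : ℕ} (τ : Perm (Fin m))

lemma pv_decomposeFin_symm_zero {i : ℕ} (hi : i ≤ m) :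
    pv (Perm.decomposeFin.symm (0, τ)) (i + 1) = pv τ i + 1 := by
  rw [pv_succ _ (by omega)]
  cases i with
  | zero => simp [pv_zero]
  | succ j =>
    rw [pv_succ τ (by omega), ← Fin.succ_mk _ _ (by omega), Perm.decomposeFin_symm_apply_succ]
    simp

lemma asc_decomposeFin_symm_zero : asc (Perm.decomposeFin.symm (0, τ)) = asc τ + 1 := by
  rw [asc, card_filter_range_succ', asc, pv_zero, pv_decomposeFin_symm_zero τ m.zero_le,
    pv_zero, zero_add, if_pos zero_lt_one]
  congr 1
  refine congrArg card (filter_congr fun i hi => ?_)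
  rw [mem_range] at hi
  rw [pv_decomposeFin_symm_zero τ hi.le, pv_decomposeFin_symm_zero τ hi, add_lt_add_iff_right]

lemma suc_decomposeFin_symm_zero : suc (Perm.decomposeFin.symm (0, τ)) = lsuc τ := by
  rw [suc_eq_card, lsuc_eq_card, Nat.succ_sub_one]
  refine congrArg card (filter_congr fun i hi => ?_)
  rw [mem_range] at hi
  rw [pv_decomposeFin_symm_zero τ hi.le, pv_decomposeFin_symm_zero τ hi, add_left_inj]

end FixingZero

lemma sum_ite_apply_zero_eq_zero {m : ℕ} {M : Type*} [AddCommMonoid M]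
    (f : Perm (Fin (m + 1)) → M) :
    ∑ σ, (if σ 0 = 0 then f σ else 0) =
      ∑ τ : Perm (Fin m), f (Perm.decomposeFin.symm (0, τ)) := by
  rw [← Perm.decomposeFin.symm.sum_comp, Fintype.sum_prod_type]
  simp

lemma subXZ_Pstar (n : ℕ) :
    subXZ (Pstar n) = ∑ σ : Perm (Fin n), X 0 ^ asc σ * X 1 ^ lsuc σ := by
  simp only [Pstar, subXZ, map_sum, map_mul, map_pow, aeval_X, asc_eq_jump_add_lsuc]
  refine sum_congr rfl fun σ _ => ?_
  simp only [Matrix.cons_val_zero, Matrix.cons_val_one]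
  ring

/-- Roselle's relation: `P_n(x,z) = P*_n(x,xz) + x(1-z) P*_{n-1}(x,xz)` for `n ≥ 1`. -/
theorem roselle_relation (n : ℕ) (hn : 1 ≤ n) :
    Ppoly n = subXZ (Pstar n) + X 0 * (1 - X 1) * subXZ (Pstar (n - 1)) := by
  obtain ⟨m, rfl⟩ := Nat.exists_eq_add_of_le' hn
  rw [Nat.add_sub_cancel, ← sub_eq_iff_eq_add', subXZ_Pstar, subXZ_Pstar, Ppoly,
    ← sum_sub_distrib]
  calc ∑ σ : Perm (Fin (m + 1)),
        ((X 0 : MvPolynomial (Fin 2) ℤ) ^ asc σ * X 1 ^ suc σ - X 0 ^ asc σ * X 1 ^ lsuc σ)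
      = ∑ σ : Perm (Fin (m + 1)),
          if σ 0 = 0 then (1 - X 1) * (X 0 ^ asc σ * X 1 ^ suc σ) else 0 := by
        refine sum_congr rfl fun σ _ => ?_
        rw [lsuc_eq_suc_add]
        split_ifs <;> ring
    _ = X 0 * (1 - X 1) * ∑ τ : Perm (Fin m), X 0 ^ asc τ * X 1 ^ lsuc τ := by
        rw [sum_ite_apply_zero_eq_zero, mul_sum]
        refine sum_congr rfl fun τ _ => ?_
        rw [asc_decomposeFin_symm_zero, suc_decomposeFin_symm_zero]
        ring
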